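/- Let d₁, d₂, d₃ be even integers with dᵢ ≥ 4 and let M₃ be a Schwartz function on ℝ⁴. Then for every α > 0 there exist β > 0 and C > 0 (depending on M₃, α and the dᵢ) such that for every c ∈ ℝ with |c| > 1: ∫_{|a| ≥ |c|^α} | M₃( c/[a], a₁c/[a], a₂c/[a], a₃c/[a] ) | · max(1, |a₁|)^{1−d₁/2} · max(1, |a₂|)^{1−d₂/2} · |[a]/c|^{−d₃/2} · {a}^{d/2−1} d^×a ≤ C · |c|^{−β}, where the integral is over a ∈ (ℝ^×)³ with |a| = max(|a₁|,|a₂|,|a₃|) ≥ |c|^α. (Corollary 9.9 of the paper, archimedean case F = ℝ.) -/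

import Mathlib

/-!
For `A = (|a₁|, |a₂|, |a₃|)` with nonzero entries, the point at which `M₃` is evaluated is
`|c / (a₁ a₂)| • (1 / A₃, A₁ / A₃, A₂ / A₃, 1)` up to signs, so its norm is at least
`|c / (a₁ a₂)| / s` with `s = min 1 (A₃ / max 1 (max A₁ A₂))`. Schwartz decay of order `d₃ / 2`
therefore bounds the integrand by `B s² min 1 A₁ min 1 A₂ / A₃`. Raised to the eighth power and
multiplied by `max A₁ (max A₂ A₃)`, this is at most `∏ min Aᵢ Aᵢ⁻¹`. As `max A₁ (max A₂ A₃)` is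
at least `|c|^α` on the domain of integration, the integrand is at most
`B |c|^(-α/8) ∏ (min Aᵢ Aᵢ⁻¹)^(1/8)`, a product of `d^×a`-integrable functions.
-/

open MeasureTheory

noncomputable section

/-- The multiplicative Haar measure `d^×a = da/|a|` on `ℝ^× = ℝ ∖ {0}`. -/
def mulHaar : Measure ℝ := volume.withDensity fun a => ENNReal.ofReal |a|⁻¹

/-- The product measure `d^×a₁ d^×a₂ d^×a₃` on `(ℝ^×)³`. -/
def mulHaar3 : Measure (ℝ × ℝ × ℝ) := mulHaar.prod (mulHaar.prod mulHaar)

open Set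

/-- On the logarithmic scale, `tent` is `exp (-|log |t||)`. -/
def tent (t : ℝ) : ℝ := min |t| |t|⁻¹

lemma tent_nonneg (t : ℝ) : 0 ≤ tent t := le_min (abs_nonneg t) (inv_nonneg.2 (abs_nonneg t))

lemma tent_rpow_nonneg (t ε : ℝ) : 0 ≤ tent t ^ ε := Real.rpow_nonneg (tent_nonneg t) ε

@[fun_prop]
lemma measurable_tent : Measurable tent := by unfold tent; fun_prop

lemma tent_neg (t : ℝ) : tent (-t) = tent t := by rw [tent, tent, abs_neg]

lemma tent_abs (t : ℝ) : tent |t| = tent t := by rw [tent, tent, abs_abs]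

lemma tent_of_pos_of_le_one {t : ℝ} (h0 : 0 < t) (h1 : t ≤ 1) : tent t = t := by
  rw [tent, abs_of_pos h0, min_eq_left (h1.trans (one_le_inv₀ h0 |>.2 h1))]

lemma tent_of_one_le {t : ℝ} (h : 1 ≤ t) : tent t = t⁻¹ := by
  rw [tent, abs_of_pos (zero_lt_one.trans_le h), min_eq_right ((inv_le_one_of_one_le₀ h).trans h)]

lemma tent_mul_max_one {A : ℝ} (hA : 0 < A) : tent A * max 1 A = min 1 A := by
  rcases le_total A 1 with h | h
  · rw [tent_of_pos_of_le_one hA h, max_eq_left h, min_eq_right h, mul_one]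
  · rw [tent_of_one_le h, max_eq_right h, min_eq_left h, inv_mul_cancel₀ hA.ne']

lemma integrableOn_Ioi_inv_mul_tent_rpow {ε : ℝ} (hε : 0 < ε) :
    IntegrableOn (fun t => |t|⁻¹ * tent t ^ ε) (Ioi 0) := by
  rw [← Ioo_union_Ici_eq_Ioi zero_lt_one, integrableOn_union]
  constructor
  · refine ((intervalIntegral.integrableOn_Ioo_rpow_iff zero_lt_one).2
      (by linarith : -1 < ε - 1)).congr_fun (fun t ht => ?_) measurableSet_Ioo
    dsimp only
    rw [Real.rpow_sub_one ht.1.ne', tent_of_pos_of_le_one ht.1 ht.2.le, abs_of_pos ht.1,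
      inv_mul_eq_div]
  · rw [integrableOn_Ici_iff_integrableOn_Ioi]
    refine ((integrableOn_Ioi_rpow_iff zero_lt_one).2
      (by linarith : -ε - 1 < -1)).congr_fun (fun t ht => ?_) measurableSet_Ioi
    have ht0 : 0 < t := zero_lt_one.trans ht
    dsimp only
    rw [Real.rpow_sub_one ht0.ne', tent_of_one_le (le_of_lt ht), abs_of_pos ht0,
      Real.inv_rpow ht0.le, Real.rpow_neg ht0.le, inv_mul_eq_div]

lemma integrable_inv_abs_mul_tent_rpow {ε : ℝ} (hε : 0 < ε) :
    Integrable (fun t => |t|⁻¹ * tent t ^ ε) := by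
  have hpos := integrableOn_Ioi_inv_mul_tent_rpow hε
  rw [← integrableOn_univ, ← Iio_union_Ici (a := (0 : ℝ)), integrableOn_union,
    integrableOn_Ici_iff_integrableOn_Ioi]
  refine ⟨?_, hpos⟩
  simpa [abs_neg, tent_neg] using hpos.comp_neg

lemma lintegral_tent_rpow_lt_top {ε : ℝ} (hε : 0 < ε) :
    ∫⁻ t, ENNReal.ofReal (tent t ^ ε) ∂mulHaar < ⊤ := by
  calc ∫⁻ t, ENNReal.ofReal (tent t ^ ε) ∂mulHaar
      = ∫⁻ t, ENNReal.ofReal (|t|⁻¹ * tent t ^ ε) := by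
        rw [mulHaar, lintegral_withDensity_eq_lintegral_mul _ (by fun_prop) (by fun_prop)]
        congr with t
        rw [Pi.mul_apply, ENNReal.ofReal_mul (by positivity)]
    _ < ⊤ := (integrable_inv_abs_mul_tent_rpow hε).lintegral_lt_top

instance : SFinite mulHaar := by unfold mulHaar; infer_instance

lemma lintegral_mulHaar3_mul {g : ℝ → ENNReal} (hg : Measurable g) :
    ∫⁻ a, g a.1 * (g a.2.1 * g a.2.2) ∂mulHaar3 = (∫⁻ t, g t ∂mulHaar) ^ 3 := by
  rw [mulHaar3,
    lintegral_prod_mul (g := fun p : ℝ × ℝ => g p.1 * g p.2) hg.aemeasurable (by fun_prop),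
    lintegral_prod_mul hg.aemeasurable hg.aemeasurable]
  ring

lemma min_one_div_pow_mul_le {A M : ℝ} (hA : 0 < A) (hM : 1 ≤ M) :
    min 1 (A / M) ^ 16 * M ^ 4 * max 1 A ^ 2 ≤ min 1 A * A ^ 8 := by
  set s := min 1 (A / M)
  have hs0 : 0 ≤ s := le_min zero_le_one (by positivity)
  have hs1 : s ≤ 1 := min_le_left _ _
  have hsM : s * M ≤ A := (le_div_iff₀ (by positivity)).1 (min_le_right _ _)
  rcases le_total A 1 with h | h
  · have hsA : s ≤ A := (le_mul_of_one_le_right hs0 hM).trans hsM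
    rw [min_eq_right h, max_eq_left h]
    calc s ^ 16 * M ^ 4 * 1 ^ 2 = (s * M) ^ 4 * s ^ 12 := by ring
      _ ≤ A ^ 4 * A ^ 12 := by gcongr
      _ = A ^ 16 := by ring
      _ ≤ A ^ 9 := pow_le_pow_of_le_one hA.le h (by norm_num)
      _ = A * A ^ 8 := by ring
  · rw [min_eq_left h, max_eq_right h]
    calc s ^ 16 * M ^ 4 * A ^ 2 = (s * M) ^ 4 * s ^ 12 * A ^ 2 := by ring
      _ ≤ A ^ 4 * 1 * A ^ 2 := by gcongr; exact pow_le_one₀ hs0 hs1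
      _ = A ^ 6 := by ring
      _ ≤ A ^ 8 := pow_le_pow_right₀ h (by norm_num)
      _ = 1 * A ^ 8 := (one_mul _).symm

lemma max_le_prod_max_one {A₁ A₂ A₃ : ℝ} :
    max A₁ (max A₂ A₃) ≤ max 1 A₁ * max 1 A₂ * max 1 A₃ := by
  have h₁ := le_max_left 1 A₁; have h₂ := le_max_left 1 A₂; have h₃ := le_max_left 1 A₃
  have h₁' := le_max_right 1 A₁; have h₂' := le_max_right 1 A₂; have h₃' := le_max_right 1 A₃
  have h₁₂ : 1 ≤ max 1 A₁ * max 1 A₂ := one_le_mul_of_one_le_of_one_le h₁ h₂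
  refine max_le ?_ (max_le ?_ ?_) <;> nlinarith

lemma pow_eight_mul_max_le_tent_mul {A₁ A₂ A₃ : ℝ} (h₁ : 0 < A₁) (h₂ : 0 < A₂) (h₃ : 0 < A₃) :
    (min 1 (A₃ / max 1 (max A₁ A₂)) ^ 2 * min 1 A₁ * min 1 A₂ / A₃) ^ 8 * max A₁ (max A₂ A₃)
      ≤ tent A₁ * tent A₂ * tent A₃ := by
  set s := min 1 (A₃ / max 1 (max A₁ A₂))
  set M := max 1 (max A₁ A₂)
  have hM₁ : max 1 A₁ ≤ M := max_le_max le_rfl (le_max_left _ _)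
  have hM₂ : max 1 A₂ ≤ M := max_le_max le_rfl (le_max_right _ _)
  have hp₁ : min 1 A₁ ^ 8 ≤ min 1 A₁ :=
    pow_le_of_le_one (le_min zero_le_one h₁.le) (min_le_left _ _) (by norm_num)
  have hp₂ : min 1 A₂ ^ 8 ≤ min 1 A₂ :=
    pow_le_of_le_one (le_min zero_le_one h₂.le) (min_le_left _ _) (by norm_num)
  have hs := min_one_div_pow_mul_le h₃ (le_max_left 1 (max A₁ A₂))
  have hN := max_le_prod_max_one (A₁ := A₁) (A₂ := A₂) (A₃ := A₃)
  have hMpos : ∀ A : ℝ, 0 < max 1 A := fun A => zero_lt_one.trans_le (le_max_left _ _)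
  rw [← mul_le_mul_iff_left₀ (mul_pos (mul_pos (hMpos A₁) (hMpos A₂)) (hMpos A₃))]
  calc _ ≤ (s ^ 2 * min 1 A₁ * min 1 A₂ / A₃) ^ 8 *
          ((max 1 A₁ * max 1 A₂ * max 1 A₃) * (max 1 A₁ * max 1 A₂ * max 1 A₃)) := by
        rw [mul_assoc]; gcongr
    _ = min 1 A₁ ^ 8 * min 1 A₂ ^ 8 * (s ^ 16 * (max 1 A₁ * max 1 A₂) ^ 2 * max 1 A₃ ^ 2)
          / A₃ ^ 8 := by ring
    _ ≤ min 1 A₁ * min 1 A₂ * (s ^ 16 * M ^ 4 * max 1 A₃ ^ 2) / A₃ ^ 8 := by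
        gcongr
        calc (max 1 A₁ * max 1 A₂) ^ 2 ≤ (M * M) ^ 2 := by gcongr
          _ = M ^ 4 := by ring
    _ ≤ min 1 A₁ * min 1 A₂ * (min 1 A₃ * A₃ ^ 8) / A₃ ^ 8 := by gcongr
    _ = tent A₁ * max 1 A₁ * (tent A₂ * max 1 A₂) * (tent A₃ * max 1 A₃) := by
        rw [tent_mul_max_one h₁, tent_mul_max_one h₂, tent_mul_max_one h₃]
        field_simp
    _ = _ := by ring

lemma le_rpow_neg_inv_mul_rpow_inv_of_pow_mul_le {x y N T : ℝ} {n : ℕ} (hn : n ≠ 0) (hx : 0 ≤ x)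
    (hy : 0 < y) (hyN : y ≤ N) (h : x ^ n * N ≤ T) :
    x ≤ y ^ (-(n : ℝ)⁻¹) * T ^ (n : ℝ)⁻¹ := by
  have hxy : x ^ n * y ≤ T := (mul_le_mul_of_nonneg_left hyN (by positivity)).trans h
  have hT : 0 ≤ T := (by positivity : 0 ≤ x ^ n * y).trans hxy
  calc x = (x ^ n) ^ (n : ℝ)⁻¹ := (Real.pow_rpow_inv_natCast hx hn).symm
    _ ≤ (y⁻¹ * T) ^ (n : ℝ)⁻¹ := by
        gcongr
        rw [inv_mul_eq_div, le_div_iff₀ hy]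
        exact hxy
    _ = y ^ (-(n : ℝ)⁻¹) * T ^ (n : ℝ)⁻¹ := by
        rw [Real.mul_rpow (inv_nonneg.2 hy.le) hT, Real.inv_rpow hy.le, Real.rpow_neg hy.le]

lemma max_one_rpow_neg_mul_rpow {A : ℝ} (hA : 0 < A) (e : ℝ) :
    max 1 A ^ (-e) * A ^ e = min 1 A ^ e := by
  rcases le_total A 1 with h | h
  · rw [max_eq_left h, min_eq_right h, Real.one_rpow, one_mul]
  · rw [max_eq_right h, min_eq_left h, Real.one_rpow, Real.rpow_neg hA.le,
      inv_mul_cancel₀ (Real.rpow_pos_of_pos hA e).ne']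

lemma integrand_weight_eq {a₁ a₂ a₃ c : ℝ} (h₁ : a₁ ≠ 0) (h₂ : a₂ ≠ 0) (h₃ : a₃ ≠ 0) (hc : c ≠ 0)
    (e₁ e₂ : ℝ) (k : ℕ) :
    max 1 |a₁| ^ (-e₁) * max 1 |a₂| ^ (-e₂) * |a₁ * a₂ * a₃ / c| ^ (-(k : ℝ)) *
        (|a₁| ^ e₁ * |a₂| ^ e₂ * |a₃| ^ ((k : ℝ) - 1))
      = min 1 |a₁| ^ e₁ * min 1 |a₂| ^ e₂ * |c / (a₁ * a₂)| ^ k / |a₃| := by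
  rw [← max_one_rpow_neg_mul_rpow (abs_pos.2 h₁), ← max_one_rpow_neg_mul_rpow (abs_pos.2 h₂),
    Real.rpow_neg (abs_nonneg _), Real.rpow_sub_one (abs_ne_zero.2 h₃), Real.rpow_natCast,
    Real.rpow_natCast]
  simp only [abs_div, abs_mul, div_pow, mul_pow]
  have := abs_pos.2 h₁; have := abs_pos.2 h₂; have := abs_pos.2 h₃; have := abs_pos.2 hc
  field_simp

lemma abs_div_mul_le_min_mul_norm {a₁ a₂ a₃ : ℝ} (c : ℝ) (h₁ : a₁ ≠ 0) (h₂ : a₂ ≠ 0)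
    (h₃ : a₃ ≠ 0) :
    |c / (a₁ * a₂)| ≤ min 1 (|a₃| / max 1 (max |a₁| |a₂|)) *
      ‖(c / (a₁ * a₂ * a₃), a₁ * c / (a₁ * a₂ * a₃), a₂ * c / (a₁ * a₂ * a₃),
        a₃ * c / (a₁ * a₂ * a₃))‖ := by
  have hA₃ : 0 < |a₃| := abs_pos.2 h₃
  have hM : 0 < max 1 (max |a₁| |a₂|) := zero_lt_one.trans_le (le_max_left _ _)
  have hu₃ : c / (a₁ * a₂) = a₃ * c / (a₁ * a₂ * a₃) := by field_simp
  have hu₀ : |c / (a₁ * a₂)| = |a₃| * |c / (a₁ * a₂ * a₃)| := by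
    simp only [abs_div, abs_mul]; field_simp
  have hu₁ : |c / (a₁ * a₂)| * |a₁| = |a₃| * |a₁ * c / (a₁ * a₂ * a₃)| := by
    simp only [abs_div, abs_mul]; field_simp
  have hu₂ : |c / (a₁ * a₂)| * |a₂| = |a₃| * |a₂ * c / (a₁ * a₂ * a₃)| := by
    simp only [abs_div, abs_mul]; field_simp
  simp only [Prod.norm_def, Real.norm_eq_abs]
  rw [min_mul_of_nonneg _ _ (by positivity), one_mul]
  refine le_min ?_ ?_
  · rw [hu₃]
    exact le_max_of_le_right (le_max_of_le_right (le_max_right _ _))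
  · rw [div_mul_eq_mul_div, le_div_iff₀ hM, mul_max_of_nonneg _ _ (abs_nonneg _),
      mul_max_of_nonneg _ _ (abs_nonneg _), mul_one, hu₁, hu₂, hu₀]
    refine max_le ?_ (max_le ?_ ?_) <;> gcongr
    · exact le_max_left _ _
    · exact le_max_of_le_right (le_max_left _ _)
    · exact le_max_of_le_right (le_max_of_le_right (le_max_left _ _))

lemma SchwartzMap.norm_mul_pow_le_seminorm_mul_pow {E F : Type*} [NormedAddCommGroup E]
    [NormedSpace ℝ E] [NormedAddCommGroup F] [NormedSpace ℝ F] (f : SchwartzMap E F) (k : ℕ)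
    {x : E} {u s : ℝ} (hu : 0 ≤ u) (hs : 0 ≤ s) (hux : u ≤ s * ‖x‖) :
    ‖f x‖ * u ^ k ≤ SchwartzMap.seminorm ℝ k 0 f * s ^ k :=
  calc ‖f x‖ * u ^ k ≤ ‖f x‖ * (s * ‖x‖) ^ k := by gcongr
    _ = s ^ k * (‖x‖ ^ k * ‖f x‖) := by ring
    _ ≤ s ^ k * SchwartzMap.seminorm ℝ k 0 f := by
        gcongr; exact SchwartzMap.norm_pow_mul_le_seminorm ℝ f k x
    _ = _ := mul_comm _ _

lemma min_sq_mul_div_le_rpow_neg_mul_tent {α c a₁ a₂ a₃ : ℝ} (hc : c ≠ 0) (h₁ : a₁ ≠ 0)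
    (h₂ : a₂ ≠ 0) (h₃ : a₃ ≠ 0) (ha : |c| ^ α ≤ max |a₁| (max |a₂| |a₃|)) :
    min 1 (|a₃| / max 1 (max |a₁| |a₂|)) ^ 2 * min 1 |a₁| * min 1 |a₂| / |a₃|
      ≤ |c| ^ (-(α / 8)) * (tent a₁ ^ (8⁻¹ : ℝ) * tent a₂ ^ (8⁻¹ : ℝ) * tent a₃ ^ (8⁻¹ : ℝ)) := by
  have hc₀ : 0 < |c| := abs_pos.2 hc
  have hroot := le_rpow_neg_inv_mul_rpow_inv_of_pow_mul_le (n := 8) (by norm_num)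
    (by positivity) (by positivity) ha
    (pow_eight_mul_max_le_tent_mul (abs_pos.2 h₁) (abs_pos.2 h₂) (abs_pos.2 h₃))
  rwa [Nat.cast_ofNat, ← Real.rpow_mul hc₀.le,
    Real.mul_rpow (mul_nonneg (tent_nonneg _) (tent_nonneg _)) (tent_nonneg _),
    Real.mul_rpow (tent_nonneg _) (tent_nonneg _), tent_abs, tent_abs, tent_abs,
    show α * -(8 : ℝ)⁻¹ = -(α / 8) by ring] at hroot

lemma integrand_le (f : SchwartzMap (ℝ × ℝ × ℝ × ℝ) ℂ) {d₁ d₂ : ℝ} (hd₁ : 4 ≤ d₁) (hd₂ : 4 ≤ d₂)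
    {k : ℕ} (hk : 2 ≤ k) {α c : ℝ} (hc : c ≠ 0) {a₁ a₂ a₃ : ℝ}
    (ha : |c| ^ α ≤ max |a₁| (max |a₂| |a₃|)) :
    ‖f (c / (a₁ * a₂ * a₃), a₁ * c / (a₁ * a₂ * a₃), a₂ * c / (a₁ * a₂ * a₃),
        a₃ * c / (a₁ * a₂ * a₃))‖ *
      max 1 |a₁| ^ (1 - d₁ / 2) * max 1 |a₂| ^ (1 - d₂ / 2) *
      |a₁ * a₂ * a₃ / c| ^ (-((k + k : ℕ) : ℝ) / 2) *
      (|a₁| ^ (d₁ / 2 - 1) * |a₂| ^ (d₂ / 2 - 1) * |a₃| ^ (((k + k : ℕ) : ℝ) / 2 - 1))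
    ≤ SchwartzMap.seminorm ℝ k 0 f * |c| ^ (-(α / 8)) *
      (tent a₁ ^ (8⁻¹ : ℝ) * (tent a₂ ^ (8⁻¹ : ℝ) * tent a₃ ^ (8⁻¹ : ℝ))) := by
  have hk' : ((k + k : ℕ) : ℝ) / 2 = k := by push_cast; ring
  have he₁ : 1 ≤ d₁ / 2 - 1 := by linarith
  have he₂ : 1 ≤ d₂ / 2 - 1 := by linarith
  have he₃ : 1 ≤ (k : ℝ) - 1 := by
    have : (2 : ℝ) ≤ k := by exact_mod_cast hk
    linarith
  rw [neg_div, hk', show 1 - d₁ / 2 = -(d₁ / 2 - 1) by ring,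
    show 1 - d₂ / 2 = -(d₂ / 2 - 1) by ring]
  set B := SchwartzMap.seminorm ℝ k 0 f
  have hB : 0 ≤ B := apply_nonneg _ _
  by_cases hzero : a₁ = 0 ∨ a₂ = 0 ∨ a₃ = 0
  · have hvanish : |a₁| ^ (d₁ / 2 - 1) * |a₂| ^ (d₂ / 2 - 1) * |a₃| ^ ((k : ℝ) - 1) = 0 := by
      rcases hzero with h | h | h <;>
        simp [h, Real.zero_rpow (by linarith : d₁ / 2 - 1 ≠ 0),
          Real.zero_rpow (by linarith : d₂ / 2 - 1 ≠ 0),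
          Real.zero_rpow (by linarith : (k : ℝ) - 1 ≠ 0)]
    rw [hvanish, mul_zero]
    have := tent_rpow_nonneg a₁ 8⁻¹; have := tent_rpow_nonneg a₂ 8⁻¹
    have := tent_rpow_nonneg a₃ 8⁻¹
    positivity
  simp only [not_or] at hzero
  obtain ⟨h₁, h₂, h₃⟩ := hzero
  set s := min 1 (|a₃| / max 1 (max |a₁| |a₂|))
  have hs₀ : 0 ≤ s := le_min zero_le_one (by positivity)
  have hm : ∀ a : ℝ, 0 ≤ min 1 |a| := fun a => le_min zero_le_one (abs_nonneg a)
  have hdecay := f.norm_mul_pow_le_seminorm_mul_pow k (abs_nonneg _) hs₀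
    (abs_div_mul_le_min_mul_norm c h₁ h₂ h₃)
  calc _ = ‖f (c / (a₁ * a₂ * a₃), a₁ * c / (a₁ * a₂ * a₃), a₂ * c / (a₁ * a₂ * a₃),
          a₃ * c / (a₁ * a₂ * a₃))‖ * |c / (a₁ * a₂)| ^ k *
        (min 1 |a₁| ^ (d₁ / 2 - 1) * min 1 |a₂| ^ (d₂ / 2 - 1) / |a₃|) := by
        linear_combination _ * integrand_weight_eq h₁ h₂ h₃ hc (d₁ / 2 - 1) (d₂ / 2 - 1) k
    _ ≤ B * s ^ 2 * (min 1 |a₁| * min 1 |a₂| / |a₃|) := by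
        gcongr ?_ * (?_ * ?_ / _)
        · exact hdecay.trans (by gcongr B * ?_; exact pow_le_pow_of_le_one hs₀ (min_le_left _ _) hk)
        · exact Real.rpow_le_self_of_le_one (hm a₁) (min_le_left _ _) he₁
        · exact Real.rpow_le_self_of_le_one (hm a₂) (min_le_left _ _) he₂
    _ = B * (s ^ 2 * min 1 |a₁| * min 1 |a₂| / |a₃|) := by ring
    _ ≤ B * (|c| ^ (-(α / 8)) *
          (tent a₁ ^ (8⁻¹ : ℝ) * tent a₂ ^ (8⁻¹ : ℝ) * tent a₃ ^ (8⁻¹ : ℝ))) := by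
        gcongr
        exact min_sq_mul_div_le_rpow_neg_mul_tent hc h₁ h₂ h₃ ha
    _ = _ := by ring

theorem stmt13_general
    (d₁ d₂ d₃ : ℕ) (hd₃e : Even d₃)
    (hd₁ : 4 ≤ d₁) (hd₂ : 4 ≤ d₂) (hd₃ : 4 ≤ d₃)
    (M₃ : SchwartzMap (ℝ × ℝ × ℝ × ℝ) ℂ) :
    ∀ α : ℝ, 0 < α →
      ∃ β : ℝ, 0 < β ∧ ∃ C : ℝ, 0 < C ∧
        ∀ c : ℝ, 1 < |c| →
          (∫⁻ a in {p : ℝ × ℝ × ℝ | |c| ^ α ≤ max |p.1| (max |p.2.1| |p.2.2|)},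
              ENNReal.ofReal
                (‖M₃ (c / (a.1 * a.2.1 * a.2.2), a.1 * c / (a.1 * a.2.1 * a.2.2),
                    a.2.1 * c / (a.1 * a.2.1 * a.2.2), a.2.2 * c / (a.1 * a.2.1 * a.2.2))‖ *
                  max 1 |a.1| ^ (1 - (d₁ : ℝ) / 2) *
                  max 1 |a.2.1| ^ (1 - (d₂ : ℝ) / 2) *
                  |a.1 * a.2.1 * a.2.2 / c| ^ (-(d₃ : ℝ) / 2) *
                  (|a.1| ^ ((d₁ : ℝ) / 2 - 1) * |a.2.1| ^ ((d₂ : ℝ) / 2 - 1) *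
                    |a.2.2| ^ ((d₃ : ℝ) / 2 - 1))) ∂mulHaar3)
          ≤ ENNReal.ofReal (C * |c| ^ (-β)) := by
  intro α hα
  obtain ⟨k, rfl⟩ := hd₃e
  set B := SchwartzMap.seminorm ℝ k 0 M₃
  have hB : 0 ≤ B := apply_nonneg _ _
  set w : ℝ → ENNReal := fun t => ENNReal.ofReal (tent t ^ (8⁻¹ : ℝ))
  have hJ : ∫⁻ t, w t ∂mulHaar ≠ ⊤ := (lintegral_tent_rpow_lt_top (by norm_num)).ne
  set K := (∫⁻ t, w t ∂mulHaar).toReal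
  refine ⟨α / 8, by positivity, B * K ^ 3 + 1, by positivity, fun c hc => ?_⟩
  have hcβ : 0 ≤ B * |c| ^ (-(α / 8)) := mul_nonneg hB (by positivity)
  have hS : MeasurableSet {p : ℝ × ℝ × ℝ | |c| ^ α ≤ max |p.1| (max |p.2.1| |p.2.2|)} :=
    measurableSet_le measurable_const (by fun_prop)
  calc _ ≤ ∫⁻ a, ENNReal.ofReal (B * |c| ^ (-(α / 8))) * (w a.1 * (w a.2.1 * w a.2.2)) ∂mulHaar3 :=
        (setLIntegral_mono' hS fun a ha => (ENNReal.ofReal_le_ofReal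
          (integrand_le M₃ (by exact_mod_cast hd₁) (by exact_mod_cast hd₂) (by omega)
            (abs_pos.1 (zero_lt_one.trans hc)) ha)).trans_eq
          (by rw [ENNReal.ofReal_mul hcβ, ENNReal.ofReal_mul (tent_rpow_nonneg _ _),
            ENNReal.ofReal_mul (tent_rpow_nonneg _ _)])).trans
        (setLIntegral_le_lintegral _ _)
    _ = ENNReal.ofReal (B * |c| ^ (-(α / 8))) * ENNReal.ofReal K ^ 3 := by
        rw [lintegral_const_mul' _ _ ENNReal.ofReal_ne_top, lintegral_mulHaar3_mul (by fun_prop),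
          ENNReal.ofReal_toReal hJ]
    _ ≤ ENNReal.ofReal ((B * K ^ 3 + 1) * |c| ^ (-(α / 8))) := by
        rw [← ENNReal.ofReal_pow ENNReal.toReal_nonneg, ← ENNReal.ofReal_mul hcβ]
        exact ENNReal.ofReal_le_ofReal (by nlinarith [Real.rpow_nonneg (abs_nonneg c) (-(α / 8))])

/-- Corollary 9.9 (archimedean case `F = ℝ`). -/
theorem stmt13
    (d₁ d₂ d₃ : ℕ) (hd₁e : Even d₁) (hd₂e : Even d₂) (hd₃e : Even d₃)
    (hd₁ : 4 ≤ d₁) (hd₂ : 4 ≤ d₂) (hd₃ : 4 ≤ d₃)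
    (M₃ : SchwartzMap (ℝ × ℝ × ℝ × ℝ) ℂ) :
    ∀ α : ℝ, 0 < α →
      ∃ β : ℝ, 0 < β ∧ ∃ C : ℝ, 0 < C ∧
        ∀ c : ℝ, 1 < |c| →
          (∫⁻ a in {p : ℝ × ℝ × ℝ | |c| ^ α ≤ max |p.1| (max |p.2.1| |p.2.2|)},
              ENNReal.ofReal
                (‖M₃ (c / (a.1 * a.2.1 * a.2.2), a.1 * c / (a.1 * a.2.1 * a.2.2),
                    a.2.1 * c / (a.1 * a.2.1 * a.2.2), a.2.2 * c / (a.1 * a.2.1 * a.2.2))‖ *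
                  max 1 |a.1| ^ (1 - (d₁ : ℝ) / 2) *
                  max 1 |a.2.1| ^ (1 - (d₂ : ℝ) / 2) *
                  |a.1 * a.2.1 * a.2.2 / c| ^ (-(d₃ : ℝ) / 2) *
                  (|a.1| ^ ((d₁ : ℝ) / 2 - 1) * |a.2.1| ^ ((d₂ : ℝ) / 2 - 1) *
                    |a.2.2| ^ ((d₃ : ℝ) / 2 - 1))) ∂mulHaar3)
          ≤ ENNReal.ofReal (C * |c| ^ (-β)) :=
  stmt13_general d₁ d₂ d₃ hd₃e hd₁ hd₂ hd₃ M₃
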